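/- arXiv:1009.2021 — 3 statements merged into one kernel-verified Lean document; each statement's English description precedes it below -/
import Mathlib

section
/- Let 𝒞 be a finite family of finite subsets of a set V and let t ∈ V. The following are equivalent: (i) there exists a set Γ ⊆ V with t ∉ Γ such that some c ∈ 𝒞 satisfies c ∩ Γ = ∅ and every c ∈ 𝒞 satisfies c ∩ (Γ ∪ {t}) ≠ ∅; (ii) there exists c ∈ 𝒞 with t ∈ c such that no c' ∈ 𝒞 satisfies c' ⊊ c. -/
/-!
For (i) ⇒ (ii), shrink a member of `𝒞` avoiding `Γ` to an inclusion-minimal member of `𝒞`;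
it still avoids `Γ`, so the element of `Γ ∪ {t}` it must contain is `t`.
For (ii) ⇒ (i), take `Γ` to be the complement of the minimal member `c`: a member of `𝒞` not
meeting `Γ` lies inside `c`, hence equals `c` and contains `t`.
-/

theorem statement1_general {V : Type} (𝒞 : Finset (Finset V)) (t : V) :
    (∃ Γ : Set V, t ∉ Γ ∧
        (∃ c ∈ 𝒞, ∀ x ∈ c, x ∉ Γ) ∧
        (∀ c ∈ 𝒞, ∃ x ∈ c, x ∈ Γ ∪ {t})) ↔
      ∃ c ∈ 𝒞, t ∈ c ∧ ∀ c' ∈ 𝒞, ¬ c' ⊂ c := by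
  constructor
  · rintro ⟨Γ, -, ⟨c₀, hc₀, hc₀Γ⟩, hhit⟩
    obtain ⟨c, hcc₀, hmin⟩ := exists_minimal_le_of_wellFoundedLT (· ∈ 𝒞) c₀ hc₀
    obtain ⟨x, hxc, hx⟩ := hhit c hmin.prop
    have hxt : x = t := hx.resolve_left (hc₀Γ x (hcc₀ hxc))
    exact ⟨c, hmin.prop, hxt ▸ hxc, fun c' hc' => hmin.not_lt hc'⟩
  · rintro ⟨c, hc, htc, hmin⟩
    refine ⟨(↑c)ᶜ, fun h => h htc, ⟨c, hc, fun x hx h => h hx⟩, fun c' hc' => ?_⟩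
    obtain rfl | hne := eq_or_ne c' c
    · exact ⟨t, htc, Or.inr rfl⟩
    · obtain ⟨x, hx, hxc⟩ := Finset.not_subset.1 fun hsub => hmin c' hc' (hsub.ssubset_of_ne hne)
      exact ⟨x, hx, Or.inl hxc⟩

/-- Let `𝒞` be a finite family of finite subsets of a set `V` and
`t ∈ V`. TFAE: (i) there exists `Γ ⊆ V` with `t ∉ Γ` such that some `c ∈ 𝒞` satisfies
`c ∩ Γ = ∅` and every `c ∈ 𝒞` satisfies `c ∩ (Γ ∪ {t}) ≠ ∅`;
(ii) there exists `c ∈ 𝒞` with `t ∈ c` such that no `c' ∈ 𝒞` satisfies `c' ⊊ c`. -/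
theorem statement1 {V : Type} [DecidableEq V] (𝒞 : Finset (Finset V)) (t : V) :
    (∃ Γ : Set V, t ∉ Γ ∧
        (∃ c ∈ 𝒞, ∀ x ∈ c, x ∉ Γ) ∧
        (∀ c ∈ 𝒞, ∃ x ∈ c, x ∈ Γ ∪ {t})) ↔
      ∃ c ∈ 𝒞, t ∈ c ∧ ∀ c' ∈ 𝒞, ¬ c' ⊂ c :=
  statement1_general 𝒞 t
end

section
/- Let m ≥ 9 be odd and divisible by 3, and let G_m be the local ring of length m. Then G_m has a minimum contingency consisting solely of forward edges, i.e., among the sets of edges that contain at least one edge of every directed cycle of length 3 and have minimum cardinality, there is one containing only forward edges. -/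
/-- Vertices of the local ring of length `m`: `(j, true)` is `v_j^+` and
`(j, false)` is `v_j^-`, with cyclic index `j : ZMod m`. -/
abbrev RingV (m : ℕ) := ZMod m × Bool

/-- The forward edges of the local ring: `(v_j^+, v_{j+1}^-)` and `(v_j^-, v_{j+1}^+)`,
indices taken cyclically modulo `m`. -/
def fwdEdges (m : ℕ) : Set (RingV m × RingV m) :=
  {e | ∃ (j : ZMod m) (s : Bool), e = ((j, s), (j + 1, !s))}

/-- The backward edges of the local ring: `(v_j^+, v_{j-2}^+)` and `(v_j^-, v_{j-2}^-)`,
indices taken cyclically modulo `m`. -/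
def bwdEdges (m : ℕ) : Set (RingV m × RingV m) :=
  {e | ∃ (j : ZMod m) (s : Bool), e = ((j, s), (j - 2, s))}

/-- The edge set of the local ring `G_m`. -/
def ringEdges (m : ℕ) : Set (RingV m × RingV m) := fwdEdges m ∪ bwdEdges m

/-- A contingency of a directed graph with edge set `E`: a set `Γ` of edges containing
at least one edge of every directed cycle of length 3. -/
def isContingency {V : Type} (E Γ : Set (V × V)) : Prop :=
  Γ ⊆ E ∧ ∀ u v w : V, u ≠ v → v ≠ w → u ≠ w →
    (u, v) ∈ E → (v, w) ∈ E → (w, u) ∈ E →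
    ((u, v) ∈ Γ ∨ (v, w) ∈ Γ ∨ (w, u) ∈ Γ)

/-- A minimum contingency: a contingency of minimum cardinality. -/
def isMinContingency {V : Type} (E Γ : Set (V × V)) : Prop :=
  isContingency E Γ ∧ ∀ Γ' : Set (V × V), isContingency E Γ' → Γ.ncard ≤ Γ'.ncard

/-!
The directed 3-cycles of `G_m` are exactly the `2m` triangles `v → fwd v → fwd (fwd v) → v`,
where `fwd (j, s) = (j + 1, !s)` and `bwd (j, s) = (j - 2, s)`: a closed walk of length 3 uses an
even number of forward steps, since each flips the sign, and three backward steps close up only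
if `m ∣ 6`. A backward edge lies in one triangle and a forward edge in two, so by double counting
every contingency has at least `m` edges. The `m` forward edges `(v_j^+, v_{j+1}^-)` meet every
triangle: the one at `v_j^+` in its first edge, the one at `v_j^-` in its second.
-/

namespace RingV

variable {m : ℕ}

def fwd (v : RingV m) : RingV m := (v.1 + 1, !v.2)

def bwd (v : RingV m) : RingV m := (v.1 - 2, v.2)

@[simp] lemma snd_fwd (v : RingV m) : (fwd v).2 = !v.2 := rfl

@[simp] lemma snd_bwd (v : RingV m) : (bwd v).2 = v.2 := rfl

@[simp] lemma bwd_fwd_fwd (v : RingV m) : bwd (fwd (fwd v)) = v := by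
  simp only [fwd, bwd, Bool.not_not]; ext <;> simp only; ring

@[simp] lemma fwd_bwd_fwd (v : RingV m) : fwd (bwd (fwd v)) = v := by
  simp only [fwd, bwd, Bool.not_not]; ext <;> simp only; ring

@[simp] lemma fwd_fwd_bwd (v : RingV m) : fwd (fwd (bwd v)) = v := by
  simp only [fwd, bwd, Bool.not_not]; ext <;> simp only; ring

lemma mem_fwdEdges_iff {u w : RingV m} : (u, w) ∈ fwdEdges m ↔ w = fwd u := by
  constructor
  · rintro ⟨j, s, h⟩
    simp only [Prod.mk.injEq] at h
    obtain ⟨rfl, rfl⟩ := h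
    rfl
  · rintro rfl
    exact ⟨u.1, u.2, rfl⟩

lemma mem_bwdEdges_iff {u w : RingV m} : (u, w) ∈ bwdEdges m ↔ w = bwd u := by
  constructor
  · rintro ⟨j, s, h⟩
    simp only [Prod.mk.injEq] at h
    obtain ⟨rfl, rfl⟩ := h
    rfl
  · rintro rfl
    exact ⟨u.1, u.2, rfl⟩

lemma mem_ringEdges_iff {u w : RingV m} : (u, w) ∈ ringEdges m ↔ w = fwd u ∨ w = bwd u :=
  or_congr mem_fwdEdges_iff mem_bwdEdges_iff

lemma fwd_ne_self (v : RingV m) : fwd v ≠ v :=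
  ne_of_apply_ne Prod.snd (by simp)

lemma fwd_fwd_fwd_ne_self (v : RingV m) : fwd (fwd (fwd v)) ≠ v :=
  ne_of_apply_ne Prod.snd (by simp)

lemma fwd_fwd_ne_self (h6 : (6 : ZMod m) ≠ 0) (v : RingV m) : fwd (fwd v) ≠ v := by
  intro h
  apply h6
  have h1 := congrArg Prod.fst h
  simp only [fwd] at h1
  linear_combination 3 * h1

lemma bwd_bwd_bwd_ne_self (h6 : (6 : ZMod m) ≠ 0) (v : RingV m) : bwd (bwd (bwd v)) ≠ v := by
  intro h
  apply h6
  have h1 := congrArg Prod.fst h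
  simp only [bwd] at h1
  linear_combination -h1

def triangle (v : RingV m) : Set (RingV m × RingV m) :=
  {(v, fwd v), (fwd v, fwd (fwd v)), (fwd (fwd v), v)}

lemma exists_triangle_subset_of_cycle (h6 : (6 : ZMod m) ≠ 0) {u v w : RingV m}
    (huv : (u, v) ∈ ringEdges m) (hvw : (v, w) ∈ ringEdges m) (hwu : (w, u) ∈ ringEdges m) :
    ∃ x, triangle x ⊆ {(u, v), (v, w), (w, u)} := by
  rw [mem_ringEdges_iff] at huv hvw hwu
  rcases huv with rfl | rfl <;> rcases hvw with rfl | rfl <;> rcases hwu with h | h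
  case inl.inl.inr => exact ⟨u, subset_of_eq rfl⟩
  case inl.inr.inl => exact ⟨u.fwd.bwd, by simp [triangle, Set.insert_subset_iff]⟩
  case inr.inl.inl => exact ⟨u.bwd, by simp [triangle, Set.insert_subset_iff]⟩
  case inr.inr.inr => exact absurd h.symm (bwd_bwd_bwd_ne_self h6 u)
  all_goals exact absurd (congrArg Prod.snd h) (by simp)

theorem isContingency_ringEdges_iff (h6 : (6 : ZMod m) ≠ 0) {Γ : Set (RingV m × RingV m)} :
    isContingency (ringEdges m) Γ ↔ Γ ⊆ ringEdges m ∧ ∀ x, (Γ ∩ triangle x).Nonempty := by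
  refine and_congr_right fun _ => ⟨fun hΓ x => ?_, fun hΓ u v w _ _ _ huv hvw hwu => ?_⟩
  · rcases hΓ x x.fwd x.fwd.fwd (fwd_ne_self x).symm (fwd_ne_self _).symm
      (fwd_fwd_ne_self h6 x).symm (mem_ringEdges_iff.2 (.inl rfl))
      (mem_ringEdges_iff.2 (.inl rfl)) (mem_ringEdges_iff.2 (.inr (bwd_fwd_fwd x).symm))
      with h | h | h <;> exact ⟨_, h, by simp [triangle]⟩
  · obtain ⟨x, hx⟩ := exists_triangle_subset_of_cycle h6 huv hvw hwu
    obtain ⟨e, heΓ, hex⟩ := hΓ x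
    rcases hx hex with rfl | rfl | rfl <;> simp [heΓ]

lemma eq_of_mem_triangle {u v x : RingV m} (h : (u, v) ∈ triangle x) :
    (v = fwd u ∧ (x = u ∨ x = fwd (bwd u))) ∨ (v ≠ fwd u ∧ x = v) := by
  simp only [triangle, Set.mem_insert_iff, Set.mem_singleton_iff, Prod.mk.injEq] at h
  rcases h with ⟨rfl, rfl⟩ | ⟨rfl, rfl⟩ | ⟨rfl, rfl⟩
  · simp
  · simp
  · exact .inr ⟨(fwd_fwd_fwd_ne_self _).symm, rfl⟩

open Finset in
lemma card_filter_mem_triangle_le_two [NeZero m] (e : RingV m × RingV m)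
    [DecidablePred fun x : RingV m => e ∈ triangle x] : #{x | e ∈ triangle x} ≤ 2 := by
  obtain ⟨u, v⟩ := e
  by_cases hv : v = fwd u
  · calc #{x | (u, v) ∈ triangle x} ≤ #{u, fwd (bwd u)} := card_le_card fun x hx => by
          simpa [hv] using eq_of_mem_triangle (mem_filter.1 hx).2
      _ ≤ 2 := card_le_two
  · calc #{x | (u, v) ∈ triangle x} ≤ #{v} := card_le_card fun x hx => by
          simpa [hv] using eq_of_mem_triangle (mem_filter.1 hx).2
      _ ≤ 2 := by simp

open Finset in
theorem le_ncard_of_forall_triangle [NeZero m] {Γ : Set (RingV m × RingV m)}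
    (hΓ : ∀ x, (Γ ∩ triangle x).Nonempty) : m ≤ Γ.ncard := by
  classical
  have hcount := card_mul_le_card_mul (fun x e => e ∈ triangle x) (s := univ)
    (t := Γ.toFinite.toFinset) (m := 1) (n := 2)
    (fun x _ => by
      obtain ⟨e, heΓ, hex⟩ := hΓ x
      exact card_pos.2 ⟨e, mem_filter.2 ⟨Γ.toFinite.mem_toFinset.2 heΓ, hex⟩⟩)
    (fun e _ => card_filter_mem_triangle_le_two e)
  rw [Set.ncard_eq_toFinset_card Γ]
  simp only [card_univ, Fintype.card_prod, ZMod.card, Fintype.card_bool] at hcount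
  omega

def plusFwdEdges (m : ℕ) : Set (RingV m × RingV m) :=
  Set.range fun j : ZMod m => ((j, true), fwd (j, true))

lemma plusFwdEdges_subset_fwdEdges : plusFwdEdges m ⊆ fwdEdges m := by
  rintro _ ⟨j, rfl⟩
  exact ⟨j, true, rfl⟩

lemma ncard_plusFwdEdges [NeZero m] : (plusFwdEdges m).ncard = m := by
  rw [plusFwdEdges, Set.ncard_range_of_injective fun _ _ h => congrArg (·.1.1) h, Nat.card_zmod]

lemma plusFwdEdges_inter_triangle_nonempty (x : RingV m) :
    (plusFwdEdges m ∩ triangle x).Nonempty := by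
  obtain ⟨j, _ | _⟩ := x
  · exact ⟨(fwd (j, false), fwd (fwd (j, false))), ⟨j + 1, rfl⟩, by simp [triangle]⟩
  · exact ⟨((j, true), fwd (j, true)), ⟨j, rfl⟩, by simp [triangle]⟩

end RingV

theorem statement14_general (m : ℕ) (hm : 9 ≤ m) :
    ∃ Γ : Set (RingV m × RingV m),
      isMinContingency (ringEdges m) Γ ∧ Γ ⊆ fwdEdges m := by
  have : NeZero m := ⟨by omega⟩
  have h6 : (6 : ZMod m) ≠ 0 := by
    rw [← Nat.cast_ofNat, Ne, ZMod.natCast_eq_zero_iff]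
    exact fun h => absurd (Nat.le_of_dvd (by norm_num) h) (by omega)
  have hplus : isContingency (ringEdges m) (RingV.plusFwdEdges m) :=
    (RingV.isContingency_ringEdges_iff h6).2
      ⟨fun _ he => .inl (RingV.plusFwdEdges_subset_fwdEdges he),
        RingV.plusFwdEdges_inter_triangle_nonempty⟩
  refine ⟨RingV.plusFwdEdges m, ⟨hplus, fun Γ hΓ => ?_⟩, RingV.plusFwdEdges_subset_fwdEdges⟩
  rw [RingV.ncard_plusFwdEdges]
  exact RingV.le_ncard_of_forall_triangle ((RingV.isContingency_ringEdges_iff h6).1 hΓ).2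

/-- Let `m ≥ 9` be odd and divisible by 3, and let `G_m` be the local
ring of length `m`. Then `G_m` has a minimum contingency consisting solely of forward
edges. -/
theorem statement14 (m : ℕ) (hm : 9 ≤ m) (hodd : Odd m) (hdvd : 3 ∣ m) :
    ∃ Γ : Set (RingV m × RingV m),
      isMinContingency (ringEdges m) Γ ∧ Γ ⊆ fwdEdges m :=
  statement14_general m hm
end

section
/- Let m ≥ 9 be odd and divisible by 3, and let G_m be the local ring of length m. Then the sets S⁺, consisting of all m forward edges of the form (v_j^+, v_{j+1}^-), and S⁻, consisting of all m forward edges of the form (v_j^-, v_{j+1}^+), are contingencies of G_m of size m, and they are the only two minimum contingencies of G_m that consist solely of forward edges. -/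
/-- `S⁺`: all `m` forward edges of the form `(v_j^+, v_{j+1}^-)`. -/
def Splus (m : ℕ) : Set (RingV m × RingV m) :=
  {e | ∃ j : ZMod m, e = ((j, true), (j + 1, false))}

/-- `S⁻`: all `m` forward edges of the form `(v_j^-, v_{j+1}^+)`. -/
def Sminus (m : ℕ) : Set (RingV m × RingV m) :=
  {e | ∃ j : ZMod m, e = ((j, false), (j + 1, true))}

/-!
Write `next (j, s) = (j + 1, !s)`. As `6 ≠ 0` in `ZMod m`, the directed triangles of `G_m` are
exactly `p → next p → next (next p) → p`, one for each of the `2m` vertices `p`. A forward edge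
lies on two of them and a backward edge on one, so a contingency has at least `m` edges; `S⁺` and
`S⁻` attain this because they meet every pair of consecutive forward edges. A minimum contingency
of forward edges is `{(p, next p) | p ∈ A}` with `|A| = m`, and covering all triangles forces
exactly one of `p`, `next p` into `A`. Then `A` is invariant under `j ↦ j + 2`, which generates
`ZMod m` for odd `m`, so `A` is one of the two sign classes.
-/

namespace LocalRingGraph

variable {m : ℕ}

def next : RingV m ≃ RingV m := (Equiv.addRight 1).prodCongr Equiv.boolNot

@[simp]
lemma next_apply (p : RingV m) : next p = (p.1 + 1, !p.2) := rfl

lemma next_next (p : RingV m) : next (next p) = (p.1 + 2, p.2) := by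
  simp [add_assoc, one_add_one_eq_two]

def fwdEdge (p : RingV m) : RingV m × RingV m := (p, next p)

/-- The backward edge closing the triangle `p → next p → next (next p) → p`. -/
def bwdEdge (p : RingV m) : RingV m × RingV m := (next (next p), p)

lemma fwdEdge_injective : Function.Injective (fwdEdge (m := m)) :=
  fun _ _ h => congrArg Prod.fst h

lemma bwdEdge_injective : Function.Injective (bwdEdge (m := m)) :=
  fun _ _ h => congrArg Prod.snd h

lemma mem_fwdEdges {u v : RingV m} : (u, v) ∈ fwdEdges m ↔ v = next u := by
  simp only [fwdEdges, Set.mem_ofPred_eq, Prod.mk.injEq, next_apply]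
  constructor
  · rintro ⟨j, s, rfl, rfl⟩
    rfl
  · rintro rfl
    exact ⟨u.1, u.2, rfl, rfl⟩

lemma mem_bwdEdges {u v : RingV m} : (u, v) ∈ bwdEdges m ↔ u = next (next v) := by
  simp only [bwdEdges, Set.mem_ofPred_eq, Prod.mk.injEq, next_next]
  constructor
  · rintro ⟨j, s, rfl, rfl⟩
    simp
  · rintro rfl
    exact ⟨v.1 + 2, v.2, rfl, by simp⟩

lemma fwdEdge_mem_fwdEdges (p : RingV m) : fwdEdge p ∈ fwdEdges m :=
  mem_fwdEdges.2 rfl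

lemma bwdEdge_notMem_fwdEdges (p : RingV m) : bwdEdge p ∉ fwdEdges m := fun h => by
  simpa [next_next] using congrArg Prod.snd (mem_fwdEdges.1 h)

lemma two_ne_zero_of_six_ne_zero (h6 : (6 : ZMod m) ≠ 0) : (2 : ZMod m) ≠ 0 := by
  intro h2
  exact h6 (by linear_combination 3 * h2)

/-- Three backward edges would close up only if `6 = 0`; the remaining non-canonical patterns
change the sign an odd number of times. -/
lemma triangle_cases (h6 : (6 : ZMod m) ≠ 0) {u v w : RingV m}
    (huv : (u, v) ∈ ringEdges m) (hvw : (v, w) ∈ ringEdges m) (hwu : (w, u) ∈ ringEdges m) :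
    (v = next u ∧ w = next v) ∨ (w = next v ∧ u = next w) ∨ (u = next w ∧ v = next u) := by
  simp only [ringEdges, Set.mem_union, mem_fwdEdges, mem_bwdEdges] at huv hvw hwu
  rcases huv with huv | huv <;> rcases hvw with hvw | hvw <;> rcases hwu with hwu | hwu
  case inl.inl.inr => exact Or.inl ⟨huv, hvw⟩
  case inr.inl.inl => exact Or.inr (Or.inl ⟨hvw, hwu⟩)
  case inl.inr.inl => exact Or.inr (Or.inr ⟨hwu, huv⟩)
  case inr.inr.inr =>
    have h := congrArg Prod.fst hwu
    simp only [huv, hvw, next_next] at h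
    exact absurd (by linear_combination -h) h6
  all_goals
    have suv := congrArg Prod.snd huv
    have svw := congrArg Prod.snd hvw
    have swu := congrArg Prod.snd hwu
    simp only [next_apply, Bool.not_not] at suv svw swu
    grind

lemma mem_or_of_isContingency (h2 : (2 : ZMod m) ≠ 0) {Γ : Set (RingV m × RingV m)}
    (hΓ : isContingency (ringEdges m) Γ) (p : RingV m) :
    fwdEdge p ∈ Γ ∨ fwdEdge (next p) ∈ Γ ∨ bwdEdge p ∈ Γ := by
  refine hΓ.2 p (next p) (next (next p)) ?_ ?_ ?_ (Or.inl (mem_fwdEdges.2 rfl))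
    (Or.inl (mem_fwdEdges.2 rfl)) (Or.inr (mem_bwdEdges.2 rfl))
  · intro h
    simpa using congrArg Prod.snd h
  · intro h
    simpa using congrArg Prod.snd h
  · intro h
    have := congrArg Prod.fst h
    simp only [next_next, left_eq_add] at this
    exact h2 this

def fwdEdgesFrom (m : ℕ) (c : Bool) : Set (RingV m × RingV m) := fwdEdge '' {p | p.2 = c}

lemma splus_eq_fwdEdgesFrom : Splus m = fwdEdgesFrom m true := by
  ext e
  simp only [Splus, fwdEdgesFrom, fwdEdge, next_apply, Set.mem_ofPred_eq, Set.mem_image]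
  constructor
  · rintro ⟨j, rfl⟩
    exact ⟨(j, true), rfl, rfl⟩
  · rintro ⟨⟨j, s⟩, rfl : s = true, rfl⟩
    exact ⟨j, rfl⟩

lemma sminus_eq_fwdEdgesFrom : Sminus m = fwdEdgesFrom m false := by
  ext e
  simp only [Sminus, fwdEdgesFrom, fwdEdge, next_apply, Set.mem_ofPred_eq, Set.mem_image]
  constructor
  · rintro ⟨j, rfl⟩
    exact ⟨(j, false), rfl, rfl⟩
  · rintro ⟨⟨j, s⟩, rfl : s = false, rfl⟩
    exact ⟨j, rfl⟩

lemma ncard_fwdEdgesFrom [NeZero m] (c : Bool) : (fwdEdgesFrom m c).ncard = m := by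
  have hsign : {p : RingV m | p.2 = c} = (fun j => (j, c)) '' Set.univ := by
    ext ⟨j, s⟩
    simp [eq_comm]
  rw [fwdEdgesFrom, Set.ncard_image_of_injective _ fwdEdge_injective, hsign,
    Set.ncard_image_of_injective _ (Prod.mk_left_injective c), Set.ncard_univ,
    Nat.card_zmod]

lemma fwdEdge_mem_or_fwdEdge_next_mem (c : Bool) (p : RingV m) :
    fwdEdge p ∈ fwdEdgesFrom m c ∨ fwdEdge (next p) ∈ fwdEdgesFrom m c := by
  by_cases hp : p.2 = c
  · exact Or.inl ⟨p, hp, rfl⟩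
  · refine Or.inr ⟨next p, ?_, rfl⟩
    cases c <;> simpa using hp

lemma isContingency_fwdEdgesFrom (h6 : (6 : ZMod m) ≠ 0) (c : Bool) :
    isContingency (ringEdges m) (fwdEdgesFrom m c) := by
  refine ⟨?_, fun u v w _ _ _ huv hvw hwu => ?_⟩
  · rintro _ ⟨p, -, rfl⟩
    exact Or.inl (fwdEdge_mem_fwdEdges p)
  · rcases triangle_cases h6 huv hvw hwu with ⟨rfl, rfl⟩ | ⟨rfl, rfl⟩ | ⟨rfl, rfl⟩
    · exact (fwdEdge_mem_or_fwdEdge_next_mem c u).imp id Or.inl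
    · exact (fwdEdge_mem_or_fwdEdge_next_mem c v).elim (fun h => Or.inr (Or.inl h))
        (fun h => Or.inr (Or.inr h))
    · exact (fwdEdge_mem_or_fwdEdge_next_mem c w).elim (fun h => Or.inr (Or.inr h)) Or.inl

lemma ncard_univ_ringV : (Set.univ : Set (RingV m)).ncard = 2 * m := by
  rw [Set.ncard_univ, Nat.card_prod, Nat.card_zmod, Nat.card_eq_fintype_card, Fintype.card_bool,
    mul_comm]

lemma ncard_preimage_next (A : Set (RingV m)) : (next ⁻¹' A).ncard = A.ncard :=
  Set.ncard_preimage_of_injective_subset_range next.injective (by simp)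

section Counting

variable [NeZero m]

lemma ncard_preimage_fwdEdge_add_ncard_preimage_bwdEdge_le (Γ : Set (RingV m × RingV m)) :
    (fwdEdge ⁻¹' Γ).ncard + (bwdEdge ⁻¹' Γ).ncard ≤ Γ.ncard := by
  have hdisj : Disjoint (fwdEdge '' (fwdEdge ⁻¹' Γ)) (bwdEdge '' (bwdEdge ⁻¹' Γ)) := by
    refine Set.disjoint_left.2 ?_
    rintro _ ⟨p, -, rfl⟩ ⟨q, -, hq⟩
    exact bwdEdge_notMem_fwdEdges q (hq ▸ fwdEdge_mem_fwdEdges p)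
  calc (fwdEdge ⁻¹' Γ).ncard + (bwdEdge ⁻¹' Γ).ncard
      = (fwdEdge '' (fwdEdge ⁻¹' Γ) ∪ bwdEdge '' (bwdEdge ⁻¹' Γ)).ncard := by
        rw [Set.ncard_union_eq hdisj, Set.ncard_image_of_injective _ fwdEdge_injective,
          Set.ncard_image_of_injective _ bwdEdge_injective]
    _ ≤ Γ.ncard :=
        Set.ncard_le_ncard (Set.union_subset (Set.image_preimage_subset _ _)
          (Set.image_preimage_subset _ _))

/-- Each of the `2m` triangles `p → next p → next (next p) → p` needs an edge of `Γ`, and each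
edge of `Γ` serves at most two of them (a forward edge) or one (a backward edge). -/
lemma le_ncard_of_isContingency (h2 : (2 : ZMod m) ≠ 0) {Γ : Set (RingV m × RingV m)}
    (hΓ : isContingency (ringEdges m) Γ) : m ≤ Γ.ncard := by
  have hΓcard := ncard_preimage_fwdEdge_add_ncard_preimage_bwdEdge_le Γ
  set A := fwdEdge ⁻¹' Γ
  set B := bwdEdge ⁻¹' Γ
  have hcover : Set.univ ⊆ A ∪ next ⁻¹' A ∪ B := fun p _ =>
    (mem_or_of_isContingency h2 hΓ p).elim (fun h => Or.inl (Or.inl h))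
      (Or.imp_left Or.inr)
  have hcount : 2 * m ≤ 2 * A.ncard + B.ncard :=
    calc 2 * m = (Set.univ : Set (RingV m)).ncard := ncard_univ_ringV.symm
      _ ≤ (A ∪ next ⁻¹' A ∪ B).ncard := Set.ncard_le_ncard hcover
      _ ≤ A.ncard + (next ⁻¹' A).ncard + B.ncard :=
          (Set.ncard_union_le _ _).trans (Nat.add_le_add_right (Set.ncard_union_le _ _) _)
      _ = 2 * A.ncard + B.ncard := by rw [ncard_preimage_next]; ring
  omega

lemma isMinContingency_fwdEdgesFrom (h6 : (6 : ZMod m) ≠ 0) (c : Bool) :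
    isMinContingency (ringEdges m) (fwdEdgesFrom m c) :=
  ⟨isContingency_fwdEdgesFrom h6 c, fun _ hΓ => (ncard_fwdEdgesFrom c).trans_le
    (le_ncard_of_isContingency (two_ne_zero_of_six_ne_zero h6) hΓ)⟩

lemma next_mem_iff_not_mem {A : Set (RingV m)} (hcover : ∀ p, p ∈ A ∨ next p ∈ A)
    (hA : A.ncard = m) (p : RingV m) : next p ∈ A ↔ p ∉ A := by
  have hunion : A ∪ next ⁻¹' A = Set.univ := Set.eq_univ_of_forall hcover
  have hinter : A ∩ next ⁻¹' A = ∅ := by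
    have := Set.ncard_union_add_ncard_inter A (next ⁻¹' A)
    rw [hunion, ncard_univ_ringV, ncard_preimage_next, hA] at this
    exact (Set.ncard_eq_zero).1 (by omega)
  refine ⟨fun hn hp => ?_, fun hp => (hcover p).resolve_left hp⟩
  exact (Set.eq_empty_iff_forall_notMem.1 hinter) p ⟨hp, hn⟩

end Counting

/-- Since `m` is odd, `2` generates `ZMod m`. -/
lemma eq_of_periodic_two (hodd : Odd m) {β : Type*} {f : ZMod m → β}
    (hf : Function.Periodic f 2) (j : ZMod m) : f j = f 0 := by
  obtain ⟨t, rfl⟩ := hodd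
  have hm : ((2 * t + 1 : ℕ) : ZMod (2 * t + 1)) = 0 := ZMod.natCast_self _
  have hj : ((j.val * (t + 1) : ℕ) : ZMod (2 * t + 1)) * 2 = j := by
    rw [Nat.cast_mul, ZMod.natCast_zmod_val]
    push_cast at hm ⊢
    linear_combination j * hm
  rw [← hf.nat_mul (j.val * (t + 1)) 0, zero_add, hj]

lemma exists_eq_setOf_snd_eq (hodd : Odd m) {A : Set (RingV m)}
    (hA : ∀ p, next p ∈ A ↔ p ∉ A) : ∃ c, A = {p | p.2 = c} := by
  have hplus : ∀ j : ZMod m, (j, true) ∈ A ↔ ((0 : ZMod m), true) ∈ A := by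
    refine fun j => Iff.of_eq (eq_of_periodic_two hodd (f := fun j => (j, true) ∈ A) ?_ j)
    intro j
    have h : next (next (j, true)) ∈ A ↔ (j, true) ∈ A := by rw [hA, hA, not_not]
    exact propext (by simpa only [next_next] using h)
  have hminus : ∀ j : ZMod m, (j, false) ∈ A ↔ ((0 : ZMod m), true) ∉ A := by
    intro j
    have h := hA (j, false)
    simp only [next_apply, Bool.not_false, hplus] at h
    tauto
  by_cases h0 : ((0 : ZMod m), true) ∈ A
  · refine ⟨true, Set.ext fun ⟨j, s⟩ => ?_⟩
    cases s <;> simp [hplus, hminus, h0]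
  · refine ⟨false, Set.ext fun ⟨j, s⟩ => ?_⟩
    cases s <;> simp [hplus, hminus, h0]

lemma exists_eq_fwdEdgesFrom_of_isMinContingency [NeZero m] (h6 : (6 : ZMod m) ≠ 0)
    (hodd : Odd m) {Γ : Set (RingV m × RingV m)} (hΓ : isMinContingency (ringEdges m) Γ)
    (hfwd : Γ ⊆ fwdEdges m) : ∃ c, Γ = fwdEdgesFrom m c := by
  have h2 := two_ne_zero_of_six_ne_zero h6
  have hΓA : fwdEdge '' (fwdEdge ⁻¹' Γ) = Γ :=
    Set.image_preimage_eq_of_subset fun e he =>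
      ⟨e.1, Prod.ext rfl (mem_fwdEdges.1 (hfwd he)).symm⟩
  have hcard : (fwdEdge ⁻¹' Γ).ncard = m := by
    rw [← Set.ncard_image_of_injective _ fwdEdge_injective, hΓA]
    exact le_antisymm ((hΓ.2 _ (isContingency_fwdEdgesFrom h6 true)).trans
      (ncard_fwdEdgesFrom true).le) (le_ncard_of_isContingency h2 hΓ.1)
  have hcover (p : RingV m) : fwdEdge p ∈ Γ ∨ fwdEdge (next p) ∈ Γ :=
    (mem_or_of_isContingency h2 hΓ.1 p).imp_right
      (Or.resolve_right · fun hb => bwdEdge_notMem_fwdEdges p (hfwd hb))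
  obtain ⟨c, hc⟩ := exists_eq_setOf_snd_eq hodd
    (next_mem_iff_not_mem (A := fwdEdge ⁻¹' Γ) hcover hcard)
  exact ⟨c, by rw [fwdEdgesFrom, ← hc, hΓA]⟩

end LocalRingGraph

theorem statement15_general (m : ℕ) (hm : 9 ≤ m) (hodd : Odd m) :
    isContingency (ringEdges m) (Splus m) ∧ (Splus m).ncard = m ∧
    isContingency (ringEdges m) (Sminus m) ∧ (Sminus m).ncard = m ∧
    isMinContingency (ringEdges m) (Splus m) ∧
    isMinContingency (ringEdges m) (Sminus m) ∧
    (∀ Γ : Set (RingV m × RingV m),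
      isMinContingency (ringEdges m) Γ → Γ ⊆ fwdEdges m →
      Γ = Splus m ∨ Γ = Sminus m) := by
  have : NeZero m := ⟨by omega⟩
  have h6 : (6 : ZMod m) ≠ 0 := by
    rw [← Nat.cast_ofNat, ne_eq, ZMod.natCast_eq_zero_iff]
    exact fun h => absurd (Nat.le_of_dvd (by norm_num) h) (by omega)
  rw [LocalRingGraph.splus_eq_fwdEdgesFrom, LocalRingGraph.sminus_eq_fwdEdgesFrom]
  refine ⟨LocalRingGraph.isContingency_fwdEdgesFrom h6 true,
    LocalRingGraph.ncard_fwdEdgesFrom true, LocalRingGraph.isContingency_fwdEdgesFrom h6 false,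
    LocalRingGraph.ncard_fwdEdgesFrom false, LocalRingGraph.isMinContingency_fwdEdgesFrom h6 true,
    LocalRingGraph.isMinContingency_fwdEdgesFrom h6 false, fun Γ hΓ hfwd => ?_⟩
  obtain ⟨c, rfl⟩ :=
    LocalRingGraph.exists_eq_fwdEdgesFrom_of_isMinContingency h6 hodd hΓ hfwd
  cases c
  · exact Or.inr rfl
  · exact Or.inl rfl

/-- Let `m ≥ 9` be odd and divisible by 3, and let `G_m` be the local
ring of length `m`. Then `S⁺` and `S⁻` are contingencies of `G_m` of size `m`, they are
minimum contingencies, and they are the only two minimum contingencies of `G_m`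
consisting solely of forward edges. -/
theorem statement15 (m : ℕ) (hm : 9 ≤ m) (hodd : Odd m) (hdvd : 3 ∣ m) :
    isContingency (ringEdges m) (Splus m) ∧ (Splus m).ncard = m ∧
    isContingency (ringEdges m) (Sminus m) ∧ (Sminus m).ncard = m ∧
    isMinContingency (ringEdges m) (Splus m) ∧
    isMinContingency (ringEdges m) (Sminus m) ∧
    (∀ Γ : Set (RingV m × RingV m),
      isMinContingency (ringEdges m) Γ → Γ ⊆ fwdEdges m →
      Γ = Splus m ∨ Γ = Sminus m) :=
  statement15_general m hm hodd
end
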